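/- For every 1 ≤ k ≤ t−1 one has α_{k−1}(a) ≠ 0 and, in PSL₂(F), (u(a)·s)^k = u(a_k)·s·u(−α_{k−2}(a)·α_{k−1}(a))·h(α_{k−1}(a)). Moreover, if q is odd and b ∈ F satisfies b ≠ a_k for all 1 ≤ k ≤ t−1, then for every 0 ≤ k ≤ t−1 one has β_{k−1}(a,b) ≠ 0 and (u(a)·s)^k·(u(b)·s·u(−b)) = u(b_k)·s·u(−β_{k−1}(a,b)·γ_{k−1}(a,b))·h(β_{k−1}(a,b)). -/

import Mathlib

open Polynomial

noncomputable section

abbrev SL2 (F : Type*) [Field F] := Matrix.SpecialLinearGroup (Fin 2) F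

abbrev PSL2 (F : Type*) [Field F] := SL2 F ⧸ Subgroup.center (SL2 F)

/-- image in `PSL₂(F)` of the matrix `[[1, x], [0, 1]]`. -/
def uu {F : Type*} [Field F] (x : F) : PSL2 F :=
  QuotientGroup.mk ⟨!![1, x; 0, 1], by simp [Matrix.det_fin_two_of]⟩

/-- image in `PSL₂(F)` of the matrix `[[y, 0], [0, y⁻¹]]`. -/
def hh {F : Type*} [Field F] (y : F) (hy : y ≠ 0) : PSL2 F :=
  QuotientGroup.mk ⟨!![y, 0; 0, y⁻¹], by simp [Matrix.det_fin_two_of, mul_inv_cancel₀ hy]⟩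

/-- image in `PSL₂(F)` of the matrix `[[0, 1], [-1, 0]]`. -/
def ss {F : Type*} [Field F] : PSL2 F :=
  QuotientGroup.mk ⟨!![0, 1; -1, 0], by simp [Matrix.det_fin_two_of]⟩

/-- the sequence `a_k`: `a₁ = a`, `a_{k+1} = a - a_k⁻¹` (with junk value `a₀ = 0`). -/
def aSeq {F : Type*} [Field F] (a : F) : ℕ → F
  | 0 => 0
  | k + 1 => a - (aSeq a k)⁻¹

/-- the sequence `b_ℓ`: `b₀ = b`, `b_{ℓ+1} = a - b_ℓ⁻¹`. -/
def bSeq {F : Type*} [Field F] (a b : F) : ℕ → F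
  | 0 => b
  | k + 1 => a - (bSeq a b k)⁻¹

/-- `alph a n = α_{n-1}(a)`, the (index-shifted) Dickson polynomial of the second
kind values: `α_{-1} = 0`, `α₀ = 1`, `α_{n+1} = a·α_n - α_{n-1}`. -/
def alph {F : Type*} [Field F] (a : F) : ℕ → F
  | 0 => 0
  | 1 => 1
  | n + 2 => a * alph a (n + 1) - alph a n

/-- `bet a b n = β_{n-1}(a,b)`: `β_{-1} = 1`, `β_n = b·α_n - α_{n-1}` for `n ≥ 0`. -/
def bet {F : Type*} [Field F] (a b : F) : ℕ → F
  | 0 => 1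
  | n + 1 => b * alph a (n + 1) - alph a n

/-- `gam a b n = γ_{n-1}(a,b)` where `γ_n = α_n + b·β_n`. -/
def gam {F : Type*} [Field F] (a b : F) (n : ℕ) : F := alph a n + b * bet a b n

/-
Up to sign, `uu a * ss` is the companion matrix `[[a, -1], [1, 0]]` of the recurrence
`x (n + 2) = a * x (n + 1) - x n`, so the columns of its powers, and of their products with
`uu b * ss * uu (-b)`, are consecutive terms of `α`, resp. of `β` and `-γ`. An element `g` of
`SL₂(F)` with `g₁₀ ≠ 0` equals `u(g₀₀ / g₁₀) s u(g₁₁ g₁₀) h(g₁₀)` in `PSL₂(F)`, and `a_k`, `b_k` are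
the ratios `α_k / α_{k-1}`, `β_k / β_{k-1}` since they obey the same Möbius recursion.

For the nonvanishing, put `ζ = -ω`: then `a = ζ + ζ⁻¹` and `α_{n-1} (ζ - ζ⁻¹) = ζⁿ - ζ⁻ⁿ`, so
`α_{n-1} = 0` iff `(ω²)ⁿ = 1`, and `t` is the order of `ω²`. As `α_{t-1} = 0`, the addition formula
`α_{m+n} = α_m α_n - α_{m-1} α_{n-1}` shows that `β_{k-1} = 0` would force `b = a_{t-k}`.
-/

section Dickson

variable {F : Type*} [Field F] (a : F)

lemma alph_add_two (n : ℕ) : alph a (n + 2) = a * alph a (n + 1) - alph a n := rfl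

lemma bet_add_two (b : F) (n : ℕ) : bet a b (n + 2) = a * bet a b (n + 1) - bet a b n := by
  cases n with
  | zero => simp only [bet, alph]; ring
  | succ n =>
    simp only [bet, alph_add_two a (n + 1), alph_add_two a n]
    ring

lemma gam_add_two (b : F) (n : ℕ) : gam a b (n + 2) = a * gam a b (n + 1) - gam a b n := by
  simp only [gam, alph_add_two, bet_add_two]
  ring

lemma alph_add_add_one (m n : ℕ) :
    alph a (m + n + 1) = alph a (m + 1) * alph a (n + 1) - alph a m * alph a n := by
  induction m generalizing n with
  | zero => simp [alph]
  | succ m ih =>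
    rw [show m + 1 + n + 1 = m + (n + 1) + 1 by ring, ih, alph_add_two, alph_add_two]
    ring

variable {a}

lemma eq_div_of_recurrence {x s : ℕ → F} (hx : ∀ n, x (n + 2) = a * x (n + 1) - x n)
    (hs : ∀ n, s (n + 1) = a - (s n)⁻¹) (h0 : s 0 = x 1 / x 0) {k : ℕ}
    (hk : ∀ j, 1 ≤ j → j ≤ k → x j ≠ 0) : s k = x (k + 1) / x k := by
  induction k with
  | zero => exact h0
  | succ k ih =>
    have hxk : x (k + 1) ≠ 0 := hk (k + 1) le_add_self le_rfl
    rw [hs, ih fun j hj hjk => hk j hj (hjk.trans k.le_succ), inv_div, hx]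
    field_simp

-- `aSeq a 0 = 0` agrees with `alph a 1 / alph a 0 = 1 / 0`.
lemma aSeq_eq_div {k : ℕ} (hα : ∀ j, 1 ≤ j → j ≤ k → alph a j ≠ 0) :
    aSeq a k = alph a (k + 1) / alph a k :=
  eq_div_of_recurrence (alph_add_two a) (fun _ => rfl) (by simp [aSeq, alph]) hα

lemma bSeq_eq_div (b : F) {k : ℕ} (hβ : ∀ j, 1 ≤ j → j ≤ k → bet a b j ≠ 0) :
    bSeq a b k = bet a b (k + 1) / bet a b k :=
  eq_div_of_recurrence (bet_add_two a b) (fun _ => rfl) (by simp [bSeq, bet, alph]) hβ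

end Dickson

section Vanishing

variable {F K : Type*} [Field F] [Field K] {a : F}

lemma alph_mul_sub_inv (f : F →+* K) {ζ : K} (hζ : ζ ≠ 0) (ha : f a = ζ + ζ⁻¹) (n : ℕ) :
    f (alph a n) * (ζ - ζ⁻¹) = ζ ^ n - ζ⁻¹ ^ n := by
  induction n using Nat.twoStepInduction with
  | zero => simp [alph]
  | one => simp [alph]
  | more n ih₀ ih₁ =>
    rw [alph_add_two, map_sub, map_mul, ha]
    linear_combination (ζ + ζ⁻¹) * ih₁ - ih₀ + (ζ ^ n - ζ⁻¹ ^ n) * mul_inv_cancel₀ hζ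

lemma alph_eq_zero_iff (f : F →+* K) {ζ : K} (hζ : ζ ≠ 0) (hζ2 : ζ ^ 2 ≠ 1)
    (ha : f a = ζ + ζ⁻¹) (n : ℕ) : alph a n = 0 ↔ (ζ ^ 2) ^ n = 1 := by
  have hsub : ζ - ζ⁻¹ ≠ 0 := by
    rw [sub_ne_zero]
    intro h
    exact hζ2 (by rw [sq]; nth_rewrite 2 [h]; exact mul_inv_cancel₀ hζ)
  rw [← map_eq_zero_iff f f.injective, ← mul_left_inj' hsub, zero_mul,
    alph_mul_sub_inv f hζ ha, sub_eq_zero, inv_pow, ← mul_eq_one_iff_eq_inv₀ (pow_ne_zero n hζ),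
    ← mul_pow, ← sq]

lemma bet_ne_zero (b : F) {t : ℕ} (ht : alph a t = 0)
    (hα : ∀ j, 1 ≤ j → j < t → alph a j ≠ 0)
    (hb : ∀ j, 1 ≤ j → j < t → b ≠ alph a (j + 1) / alph a j) {k : ℕ} (hk : k < t) :
    bet a b k ≠ 0 := by
  rcases k with _ | n
  · exact one_ne_zero
  · intro h
    obtain ⟨m, rfl⟩ : ∃ m, t = m + n + 1 + 1 := ⟨t - n - 2, by omega⟩
    have hαn : alph a (n + 1) ≠ 0 := hα _ le_add_self (by omega)
    have hαm : alph a (m + 1) ≠ 0 := hα _ le_add_self (by omega)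
    have hb' : b = alph a n / alph a (n + 1) := by
      rw [eq_div_iff hαn, ← sub_eq_zero]
      exact h
    have hsum := alph_add_add_one a (m + 1) n
    rw [show m + 1 + n + 1 = m + n + 1 + 1 by ring, ht] at hsum
    refine hb (m + 1) le_add_self (by omega) ?_
    rw [hb', div_eq_div_iff hαn hαm]
    linear_combination hsum

end Vanishing

namespace PSL2

variable {F : Type*} [Field F]

open Matrix

-- Unfolding `uu`, `ss`, `hh` to this form (rather than to `⟨A, h⟩`) lets
-- `SpecialLinearGroup.coe_mul` rewrite their products.
def slOfDet (A : Matrix (Fin 2) (Fin 2) F) (h : A.det = 1) : SL2 F := ⟨A, h⟩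

lemma coe_neg (g : SL2 F) : ((-g : SL2 F) : PSL2 F) = g := by
  have hcenter : (-1 : SL2 F) ∈ Subgroup.center (SL2 F) :=
    Subgroup.mem_center_iff.mpr fun h => by rw [mul_neg_one, neg_one_mul]
  rw [← mul_neg_one, QuotientGroup.mk_mul, (QuotientGroup.eq_one_iff _).mpr hcenter, mul_one]

lemma mk_eq_uu_mul_ss_mul_uu_mul_hh (g : SL2 F) {c x y : F} (hy : y ≠ 0) (h10 : g 1 0 = y)
    (h00 : g 0 0 = c * y) (h11 : g 1 1 * y = x) : (g : PSL2 F) = uu c * ss * uu x * hh y hy := by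
  have hdet : g 0 0 * g 1 1 - g 0 1 * g 1 0 = 1 := by
    rw [← det_fin_two]; exact g.det_coe
  -- as matrices, `u(c) s u(x) h(y) = -g`
  rw [← coe_neg]
  change _ = ((slOfDet _ _ * slOfDet _ _ * slOfDet _ _ * slOfDet _ _ : SL2 F) : PSL2 F)
  congr 1
  refine Matrix.SpecialLinearGroup.ext _ _ fun i j => ?_
  simp only [SpecialLinearGroup.coe_neg, Matrix.SpecialLinearGroup.coe_mul]
  simp only [slOfDet, mul_fin_two]
  subst h10 h11
  fin_cases i <;> fin_cases j <;> simp [h00] <;> field_simp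
  linear_combination hdet - g 1 1 * h00

def companion (a : F) : SL2 F := slOfDet !![a, -1; 1, 0] (by simp [det_fin_two_of])

lemma uu_mul_ss (a : F) : uu a * ss = (companion a : PSL2 F) := by
  rw [← coe_neg]
  change ((slOfDet _ _ * slOfDet _ _ : SL2 F) : PSL2 F) = _
  congr 1
  refine Matrix.SpecialLinearGroup.ext _ _ fun i j => ?_
  simp only [SpecialLinearGroup.coe_neg, Matrix.SpecialLinearGroup.coe_mul]
  simp only [companion, slOfDet, mul_fin_two]
  fin_cases i <;> fin_cases j <;> simp

lemma uu_mul_ss_mul_uu_neg (b : F) :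
    uu b * ss * uu (-b) =
      (slOfDet !![b, -(b * b + 1); 1, -b] (by simp [det_fin_two_of]) : PSL2 F) := by
  rw [← coe_neg]
  change ((slOfDet _ _ * slOfDet _ _ * slOfDet _ _ : SL2 F) : PSL2 F) = _
  congr 1
  refine Matrix.SpecialLinearGroup.ext _ _ fun i j => ?_
  simp only [SpecialLinearGroup.coe_neg, Matrix.SpecialLinearGroup.coe_mul]
  simp only [slOfDet, mul_fin_two]
  fin_cases i <;> fin_cases j <;> simp

lemma companion_pow_mul {a : F} {x y : ℕ → F} (hx : ∀ n, x (n + 2) = a * x (n + 1) - x n)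
    (hy : ∀ n, y (n + 2) = a * y (n + 1) - y n) (k : ℕ) :
    ((companion a ^ k : SL2 F) : Matrix (Fin 2) (Fin 2) F) * !![x 1, y 1; x 0, y 0] =
      !![x (k + 1), y (k + 1); x k, y k] := by
  induction k with
  | zero => simp
  | succ k ih =>
    rw [pow_succ', Matrix.SpecialLinearGroup.coe_mul, Matrix.mul_assoc, ih]
    simp only [companion, slOfDet, mul_fin_two, hx, hy]
    simp only [neg_one_mul, one_mul, zero_mul, add_zero, ← sub_eq_add_neg]

lemma uu_mul_ss_pow {a : F} {k : ℕ} (hk : 1 ≤ k) (hα : ∀ j, 1 ≤ j → j ≤ k → alph a j ≠ 0) :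
    (uu a * ss : PSL2 F) ^ k =
      uu (aSeq a k) * ss * uu (-(alph a (k - 1) * alph a k)) * hh (alph a k) (hα k hk le_rfl) := by
  obtain ⟨j, rfl⟩ : ∃ j, k = j + 1 := ⟨k - 1, by omega⟩
  have hmat : ((companion a ^ (j + 1) : SL2 F) : Matrix (Fin 2) (Fin 2) F) =
      !![alph a (j + 2), -alph a (j + 1); alph a (j + 1), -alph a j] := by
    rw [pow_succ, Matrix.SpecialLinearGroup.coe_mul]
    convert companion_pow_mul (x := fun n => alph a (n + 1)) (y := fun n => -alph a n)
      (fun n => alph_add_two a (n + 1)) (fun n => by rw [alph_add_two]; ring) j using 2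
    simp [companion, slOfDet, alph]
  rw [uu_mul_ss, ← QuotientGroup.mk_pow]
  refine mk_eq_uu_mul_ss_mul_uu_mul_hh _ _ (by simp [hmat]) ?_ (by simp [hmat])
  rw [aSeq_eq_div hα, div_mul_cancel₀ _ (hα _ le_add_self le_rfl)]
  simp [hmat]

lemma uu_mul_ss_pow_mul_uu_mul_ss_mul_uu_neg {a : F} (b : F) {k : ℕ}
    (hβ : ∀ j, j ≤ k → bet a b j ≠ 0) :
    (uu a * ss : PSL2 F) ^ k * (uu b * ss * uu (-b)) =
      uu (bSeq a b k) * ss * uu (-(bet a b k * gam a b k)) * hh (bet a b k) (hβ k le_rfl) := by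
  have hmat : ((companion a ^ k * slOfDet !![b, -(b * b + 1); 1, -b]
        (by simp [det_fin_two_of]) : SL2 F) : Matrix (Fin 2) (Fin 2) F) =
      !![bet a b (k + 1), -gam a b (k + 1); bet a b k, -gam a b k] := by
    rw [Matrix.SpecialLinearGroup.coe_mul]
    convert companion_pow_mul (x := bet a b) (y := fun n => -gam a b n)
      (bet_add_two a b) (fun n => by rw [gam_add_two]; ring) k using 2
    simp [slOfDet, bet, gam, alph, add_comm]
  rw [uu_mul_ss, uu_mul_ss_mul_uu_neg, ← QuotientGroup.mk_pow, ← QuotientGroup.mk_mul]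
  refine mk_eq_uu_mul_ss_mul_uu_mul_hh _ _ (by rw [hmat]; simp) ?_
    (by rw [hmat]; simp [mul_comm])
  rw [bSeq_eq_div b fun j _ hjk => hβ j hjk, div_mul_cancel₀ _ (hβ k le_rfl), hmat]
  simp

end PSL2

theorem stmt19_general (F : Type*) [Field F] [Fintype F] (q : ℕ) (hq : Fintype.card F = q)
    (a : F)
    (ω : AlgebraicClosure F) (hroot : aeval ω (X ^ 2 + C a * X + 1 : F[X]) = 0)
    (hord : orderOf ω = q + 1) (t : ℕ) (ht : t = (q + 1) / Nat.gcd 2 (q + 1)) :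
    (∀ k : ℕ, 1 ≤ k → k ≤ t - 1 →
      ∃ h : alph a k ≠ 0,
        (uu a * ss : PSL2 F) ^ k =
          uu (aSeq a k) * ss * uu (-(alph a (k - 1) * alph a k)) * hh (alph a k) h) ∧
    (Odd q → ∀ b : F, (∀ k : ℕ, 1 ≤ k → k ≤ t - 1 → b ≠ aSeq a k) →
      ∀ k : ℕ, k ≤ t - 1 →
        ∃ h : bet a b k ≠ 0,
          (uu a * ss : PSL2 F) ^ k * (uu b * ss * uu (-b)) =
            uu (bSeq a b k) * ss * uu (-(bet a b k * gam a b k)) * hh (bet a b k) h) := by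
  set f := algebraMap F (AlgebraicClosure F)
  have hroot' : ω ^ 2 + f a * ω + 1 = 0 := by simpa [f] using hroot
  have hω : ω ≠ 0 := by rintro rfl; simp at hroot'
  have ha : f a = -ω + (-ω)⁻¹ := by
    field_simp
    linear_combination hroot'
  have hω2 : (-ω) ^ 2 ≠ 1 := by
    rw [neg_sq]
    intro h
    have hq2 : 2 ≤ q := hq ▸ Fintype.one_lt_card
    have := orderOf_le_of_pow_eq_one two_pos h
    omega
  have htpos : 0 < t := by
    rw [ht]
    exact Nat.div_pos (Nat.le_of_dvd q.succ_pos (Nat.gcd_dvd_right _ _))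
      (Nat.gcd_pos_of_pos_left _ two_pos)
  obtain rfl : t = orderOf ((-ω) ^ 2) := by
    rw [ht, neg_sq, orderOf_pow' ω two_ne_zero, hord, Nat.gcd_comm]
  have hzero := alph_eq_zero_iff f (neg_ne_zero.mpr hω) hω2 ha
  have hα : ∀ j, 1 ≤ j → j < orderOf ((-ω) ^ 2) → alph a j ≠ 0 := fun j hj hjt =>
    (hzero j).not.mpr (pow_ne_one_of_lt_orderOf (by omega) hjt)
  have hαt : alph a (orderOf ((-ω) ^ 2)) = 0 := (hzero _).mpr (pow_orderOf_eq_one _)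
  refine ⟨fun k hk hkt => ⟨_, PSL2.uu_mul_ss_pow hk fun j hj hjk => hα j hj (by omega)⟩,
    fun _ b hb k hkt => ⟨_, PSL2.uu_mul_ss_pow_mul_uu_mul_ss_mul_uu_neg b fun j hjk => ?_⟩⟩
  refine bet_ne_zero b hαt hα (fun i hi hit => ?_) (by omega)
  rw [← aSeq_eq_div fun j hj hji => hα j hj (by omega)]
  exact hb i hi (by omega)

theorem stmt19 (F : Type*) [Field F] [Fintype F] (q : ℕ) (hq : Fintype.card F = q)
    (a : F) (hirr : Irreducible (X ^ 2 + C a * X + 1 : F[X]))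
    (ω : AlgebraicClosure F) (hroot : aeval ω (X ^ 2 + C a * X + 1 : F[X]) = 0)
    (hord : orderOf ω = q + 1) (t : ℕ) (ht : t = (q + 1) / Nat.gcd 2 (q + 1)) :
    (∀ k : ℕ, 1 ≤ k → k ≤ t - 1 →
      ∃ h : alph a k ≠ 0,
        (uu a * ss : PSL2 F) ^ k =
          uu (aSeq a k) * ss * uu (-(alph a (k - 1) * alph a k)) * hh (alph a k) h) ∧
    (Odd q → ∀ b : F, (∀ k : ℕ, 1 ≤ k → k ≤ t - 1 → b ≠ aSeq a k) →
      ∀ k : ℕ, k ≤ t - 1 →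
        ∃ h : bet a b k ≠ 0,
          (uu a * ss : PSL2 F) ^ k * (uu b * ss * uu (-b)) =
            uu (bSeq a b k) * ss * uu (-(bet a b k * gam a b k)) * hh (bet a b k) h) :=
  stmt19_general F q hq a ω hroot hord t ht
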